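/- arXiv:1812.00260 — 3 statements merged into one kernel-verified Lean document; each statement's English description precedes it below -/
import Mathlib

section
/- For every integer t ≥ 0 and every s_{0:t} ∈ E^{t+1} with s_0 = l_0 and F^{s_t}((l(t),∞)) > 0: (i) μ(S_{0:t} = s_{0:t} and S_{t+1} = s_t) = μ(S_{0:t} = s_{0:t}) · F^{s_t}((x(t),∞)) / F^{s_t}((l(t),∞)); and (ii) for every j ∈ E with j ≠ s_t, μ(S_{0:t} = s_{0:t} and S_{t+1} = j) = μ(S_{0:t} = s_{0:t}) · [F^{s_t}({x(t)}) / F^{s_t}((l(t),∞))] · P^{s_t,j}, where x(t) = l(t)+1 and l(t) is computed from the path s_{0:t}. In particular the one-step predictive law of S given its past depends only on the current state and the current holding duration. -/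
open MeasureTheory

/-! # Setup

As in the paper: `μ` is the law on `Ω = ℕ → E × ℕ+` of a Markov renewal process
`{(L_n, T_n)}` with characteristic couple `(P, F)` starting at `l₀` (hypothesis `hμ`),
and `S t = L (N t)` is the associated semi-Markov process.  For a finite path `s_{0:t}`,
`l(t) = t - τ_{N(t)}` is the current holding duration and `x(t) = l(t) + 1`. -/

instance : MeasurableSpace ℕ+ := ⊤

variable {E : Type*}

def tauProc (ω : ℕ → E × ℕ+) (n : ℕ) : ℕ := ∑ h ∈ Finset.range n, ((ω h).2 : ℕ)

noncomputable def NProc (ω : ℕ → E × ℕ+) (t : ℕ) : ℕ :=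
  ((Finset.Icc 1 t).filter (fun n => tauProc ω n ≤ t)).card

noncomputable def SProc (ω : ℕ → E × ℕ+) (t : ℕ) : E := (ω (NProc ω t)).1

noncomputable def jumpSet [DecidableEq E] (s : ℕ → E) (t : ℕ) : Finset ℕ :=
  (Finset.Icc 1 t).filter (fun r => s r ≠ s (r - 1))

noncomputable def numJumps [DecidableEq E] (s : ℕ → E) (t : ℕ) : ℕ := (jumpSet s t).card

noncomputable def jumpTime [DecidableEq E] (s : ℕ → E) (t : ℕ) (k : ℕ) : ℕ :=
  ((0 : ℕ) :: (jumpSet s t).sort (· ≤ ·)).getD k 0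

/-- `l(t) = t - τ_{N(t)}`. -/
noncomputable def holdDur [DecidableEq E] (s : ℕ → E) (t : ℕ) : ℕ :=
  t - jumpTime s t (numJumps s t)

/-- `F^i((a,∞)) = ∑_{u > a} F^i({u})`. -/
noncomputable def survF (F : E → ℕ+ → ENNReal) (i : E) (a : ℕ) : ENNReal :=
  ∑' u : ℕ+, if a < (u : ℕ) then F i u else 0

/-! Off the null event on which the embedded chain repeats a state (`P i i = 0`), the path
`S_{0:t}` and the Markov renewal sequence determine each other: `S_{0:t} = s_{0:t}` holds exactly
when the first `N(t) + 1` states and `N(t)` sojourns are the jump states and gaps of `s` and the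
current sojourn `T_{N(t)}` exceeds `l(t)`. Adding `S_{t+1} = s_t` turns the last condition into
`T_{N(t)} > l(t) + 1`, while `S_{t+1} = j ≠ s_t` turns it into `T_{N(t)} = l(t) + 1` and
`L_{N(t)+1} = j`. Summing the cylinder weights over the free coordinates, the three events have
measure `W ⬝ F((l,∞))`, `W ⬝ F((l+1,∞))` and `W ⬝ F({l+1}) ⬝ P^{s_t,j}` for one common
weight `W`. -/

open Finset
open scoped ENNReal

section Renewal

variable (ω : ℕ → E × ℕ+)

@[simp]
lemma tauProc_zero : tauProc ω 0 = 0 := rfl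

lemma tauProc_succ (n : ℕ) : tauProc ω (n + 1) = tauProc ω n + (ω n).2 :=
  sum_range_succ _ n

lemma tauProc_strictMono : StrictMono (tauProc ω) :=
  strictMono_nat_of_lt_succ fun n => by
    rw [tauProc_succ]
    exact Nat.lt_add_of_pos_right (ω n).2.pos

lemma exists_tauProc_le_lt_succ (t : ℕ) :
    ∃ n, tauProc ω n ≤ t ∧ t < tauProc ω (n + 1) := by
  classical
  have hex : ∃ n, t < tauProc ω (n + 1) := ⟨t, (tauProc_strictMono ω).id_le (t + 1)⟩
  refine ⟨Nat.find hex, ?_, Nat.find_spec hex⟩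
  rcases Nat.eq_zero_or_eq_succ_pred (Nat.find hex) with h | h
  · rw [h]; exact Nat.zero_le t
  · rw [h]; exact not_lt.mp (Nat.find_min hex (m := Nat.find hex - 1) (by omega))

variable {ω}

lemma tauProc_le_iff {t n k : ℕ} (h₁ : tauProc ω n ≤ t) (h₂ : t < tauProc ω (n + 1)) :
    tauProc ω k ≤ t ↔ k ≤ n :=
  ⟨fun hk => Nat.lt_succ_iff.mp ((tauProc_strictMono ω).lt_iff_lt.mp (hk.trans_lt h₂)),
    fun hk => ((tauProc_strictMono ω).monotone hk).trans h₁⟩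

lemma NProc_eq {t n : ℕ} (h₁ : tauProc ω n ≤ t) (h₂ : t < tauProc ω (n + 1)) :
    NProc ω t = n := by
  have hnt : n ≤ t := ((tauProc_strictMono ω).id_le n).trans h₁
  have : (Icc 1 t).filter (fun k => tauProc ω k ≤ t) = Icc 1 n := by
    ext k
    simp only [mem_filter, mem_Icc, tauProc_le_iff h₁ h₂]
    omega
  rw [NProc, this, Nat.card_Icc, Nat.add_sub_cancel]

lemma tauProc_NProc_le (t : ℕ) : tauProc ω (NProc ω t) ≤ t := by
  obtain ⟨n, h₁, h₂⟩ := exists_tauProc_le_lt_succ ω t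
  rwa [NProc_eq h₁ h₂]

lemma lt_tauProc_NProc_succ (t : ℕ) : t < tauProc ω (NProc ω t + 1) := by
  obtain ⟨n, h₁, h₂⟩ := exists_tauProc_le_lt_succ ω t
  rwa [NProc_eq h₁ h₂]

lemma tauProc_le_iff_le_NProc {t k : ℕ} : tauProc ω k ≤ t ↔ k ≤ NProc ω t :=
  tauProc_le_iff (tauProc_NProc_le t) (lt_tauProc_NProc_succ t)

lemma SProc_eq {t n : ℕ} (h₁ : tauProc ω n ≤ t) (h₂ : t < tauProc ω (n + 1)) :
    SProc ω t = (ω n).1 := by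
  rw [SProc, NProc_eq h₁ h₂]

lemma SProc_tauProc (n : ℕ) : SProc ω (tauProc ω n) = (ω n).1 :=
  SProc_eq le_rfl (tauProc_strictMono ω n.lt_succ_self)

lemma SProc_ne_SProc_pred_iff (hL : ∀ k, (ω (k + 1)).1 ≠ (ω k).1) {r : ℕ} (hr : 1 ≤ r) :
    SProc ω r ≠ SProc ω (r - 1) ↔ r ∈ Set.range (tauProc ω) := by
  obtain ⟨n, h₁, h₂⟩ := exists_tauProc_le_lt_succ ω r
  rw [SProc_eq h₁ h₂]
  rcases h₁.lt_or_eq with hlt | heq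
  · rw [SProc_eq (n := n) (by omega) (by omega), ne_self_iff_false, false_iff]
    rintro ⟨k, rfl⟩
    have := (tauProc_strictMono ω).lt_iff_lt.mp hlt
    have := (tauProc_strictMono ω).lt_iff_lt.mp h₂
    omega
  · refine iff_of_true ?_ ⟨n, heq⟩
    cases n with
    | zero => rw [tauProc_zero] at heq; omega
    | succ n =>
      have hpos := (ω n).2.pos
      rw [tauProc_succ] at heq
      rw [SProc_eq (n := n) (by omega) (by rw [tauProc_succ]; omega)]
      exact hL n

end Renewal

section Jumps

variable [DecidableEq E] (s : ℕ → E) (t : ℕ)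

lemma zero_notMem_jumpSet : 0 ∉ jumpSet s t := by
  simp [jumpSet]

lemma eq_of_succ_notMem_jumpSet {r : ℕ} (hr : r + 1 ≤ t) (h : r + 1 ∉ jumpSet s t) :
    s (r + 1) = s r := by
  simpa [jumpSet, hr] using h

lemma jumpTime_eq_getD (k : ℕ) :
    jumpTime s t k = ((insert 0 (jumpSet s t)).sort (· ≤ ·)).getD k 0 := by
  rw [jumpTime, sort_insert _ (fun b _ => Nat.zero_le b) (zero_notMem_jumpSet s t)]

lemma card_insert_zero_jumpSet : #(insert 0 (jumpSet s t)) = numJumps s t + 1 :=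
  card_insert_of_notMem (zero_notMem_jumpSet s t)

lemma image_jumpTime_range :
    (range (numJumps s t + 1)).image (jumpTime s t) = insert 0 (jumpSet s t) := by
  ext r
  simp only [mem_image, mem_range, jumpTime_eq_getD, ← card_insert_zero_jumpSet,
    ← length_sort (α := ℕ) (· ≤ ·)]
  rw [← mem_sort (· ≤ ·), List.mem_iff_getElem]
  refine exists_congr fun k => ⟨fun ⟨hk, h⟩ => ⟨hk, ?_⟩, fun ⟨hk, h⟩ => ⟨hk, ?_⟩⟩
  · rwa [List.getD_eq_getElem _ _ hk] at h
  · rwa [List.getD_eq_getElem _ _ hk]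

lemma jumpTime_strictMonoOn : StrictMonoOn (jumpTime s t) (Set.Iic (numJumps s t)) := by
  intro i hi j hj hij
  have hlen := length_sort (α := ℕ) (· ≤ ·) (s := insert 0 (jumpSet s t))
  rw [card_insert_zero_jumpSet] at hlen
  simp only [Set.mem_Iic] at hi hj
  simp only [jumpTime_eq_getD]
  rw [List.getD_eq_getElem _ _ (by omega), List.getD_eq_getElem _ _ (by omega)]
  exact (sortedLT_sort _).getElem_lt_getElem_of_lt hij

lemma jumpTime_lt_jumpTime_succ {k : ℕ} (hk : k < numJumps s t) :
    jumpTime s t k < jumpTime s t (k + 1) :=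
  jumpTime_strictMonoOn s t (Set.mem_Iic.mpr hk.le) (Set.mem_Iic.mpr hk) k.lt_succ_self

lemma jumpTime_mem {k : ℕ} (hk : k ≤ numJumps s t) : jumpTime s t k ∈ insert 0 (jumpSet s t) :=
  image_jumpTime_range s t ▸ mem_image_of_mem _ (mem_range.mpr (Nat.lt_succ_of_le hk))

lemma exists_jumpTime_eq {r : ℕ} (hr : r ∈ insert 0 (jumpSet s t)) :
    ∃ k ≤ numJumps s t, jumpTime s t k = r := by
  rw [← image_jumpTime_range] at hr
  simpa [Nat.lt_succ_iff] using hr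

lemma jumpTime_le {k : ℕ} (hk : k ≤ numJumps s t) : jumpTime s t k ≤ t := by
  rcases mem_insert.mp (jumpTime_mem s t hk) with h | h
  · exact h ▸ Nat.zero_le t
  · exact (mem_Icc.mp (mem_filter.mp h).1).2

lemma numJumps_eq_and_jumpTime_eq {f : ℕ → ℕ} (hf : StrictMono f) {n : ℕ}
    (h : insert 0 (jumpSet s t) = (range (n + 1)).image f) :
    numJumps s t = n ∧ ∀ k ≤ n, jumpTime s t k = f k := by
  refine ⟨?_, fun k hk => ?_⟩
  · have := card_insert_zero_jumpSet s t
    rw [h, card_image_of_injective _ hf.injective, card_range] at this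
    omega
  · have hsort : (insert 0 (jumpSet s t)).sort (· ≤ ·) = (List.range (n + 1)).map f := by
      have := StrictMonoOn.map_finsetSort (f := ⟨f, hf.injective⟩) (s := range (n + 1))
        (hf.strictMonoOn _)
      rw [sort_range, map_eq_image] at this
      rw [h]
      exact this.symm
    rw [jumpTime_eq_getD, hsort, List.getD_eq_getElem _ _ (by simp; omega)]
    simp

lemma jumpSet_congr {s s' : ℕ → E} (h : ∀ r ≤ t, s r = s' r) : jumpSet s t = jumpSet s' t := by
  refine filter_congr fun r hr => ?_
  rw [mem_Icc] at hr
  rw [h r hr.2, h (r - 1) (by omega)]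

lemma eq_of_jumpSet_eq {s s' : ℕ → E} (hJ : jumpSet s t = jumpSet s' t)
    (hval : ∀ r ∈ insert 0 (jumpSet s t), s r = s' r) : ∀ r ≤ t, s r = s' r := by
  intro r hr
  induction r with
  | zero => exact hval 0 (mem_insert_self _ _)
  | succ r ih =>
    by_cases hjump : r + 1 ∈ jumpSet s t
    · exact hval _ (mem_insert_of_mem hjump)
    · have hjump' : r + 1 ∉ jumpSet s' t := hJ ▸ hjump
      rw [eq_of_succ_notMem_jumpSet _ _ hr hjump, eq_of_succ_notMem_jumpSet _ _ hr hjump',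
        ih (by omega)]

lemma apply_eq_of_jumpTime_numJumps_le {r : ℕ} (h₁ : jumpTime s t (numJumps s t) ≤ r)
    (h₂ : r ≤ t) : s r = s (jumpTime s t (numJumps s t)) := by
  induction r, h₁ using Nat.le_induction with
  | base => rfl
  | succ r hr ih =>
    have hjump : r + 1 ∉ jumpSet s t := by
      intro hmem
      obtain ⟨k, hk, hkr⟩ := exists_jumpTime_eq s t (mem_insert_of_mem hmem)
      have := (jumpTime_strictMonoOn s t).monotoneOn hk (Set.mem_Iic.mpr le_rfl) hk
      omega
    rw [eq_of_succ_notMem_jumpSet s t h₂ hjump, ih (by omega)]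

lemma apply_jumpTime_numJumps : s (jumpTime s t (numJumps s t)) = s t :=
  (apply_eq_of_jumpTime_numJumps_le s t (jumpTime_le s t le_rfl) le_rfl).symm

end Jumps

lemma insert_zero_jumpSet_SProc [DecidableEq E] {ω : ℕ → E × ℕ+}
    (hL : ∀ k, (ω (k + 1)).1 ≠ (ω k).1) (t : ℕ) :
    insert 0 (jumpSet (SProc ω) t) = (range (NProc ω t + 1)).image (tauProc ω) := by
  ext r
  simp only [mem_insert, jumpSet, mem_filter, mem_Icc, mem_image, mem_range, Nat.lt_succ_iff,
    ← tauProc_le_iff_le_NProc]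
  constructor
  · rintro (rfl | ⟨⟨hr, hrt⟩, hjump⟩)
    · exact ⟨0, Nat.zero_le t, rfl⟩
    · obtain ⟨n, rfl⟩ := (SProc_ne_SProc_pred_iff hL hr).mp hjump
      exact ⟨n, hrt, rfl⟩
  · rintro ⟨n, hn, rfl⟩
    rcases Nat.eq_zero_or_pos n with rfl | hpos
    · exact Or.inl rfl
    · have hr : 1 ≤ tauProc ω n := hpos.trans_le ((tauProc_strictMono ω).id_le n)
      exact Or.inr ⟨⟨hr, hn⟩, (SProc_ne_SProc_pred_iff hL hr).mpr ⟨n, rfl⟩⟩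

def renewalCylinder (n : ℕ) (l : ℕ → E) (τv : ℕ → ℕ+) : Set (ℕ → E × ℕ+) :=
  {ω | (∀ k ≤ n, (ω k).1 = l k) ∧ ∀ k < n, (ω k).2 = τv k}

lemma measurableSet_renewalCylinder [MeasurableSpace E] [MeasurableSingletonClass E] (n : ℕ)
    (l : ℕ → E) (τv : ℕ → ℕ+) : MeasurableSet (renewalCylinder n l τv) := by
  simp only [renewalCylinder, Set.ofPred_and, Set.ofPred_forall]
  measurability

lemma renewalCylinder_succ_update (n : ℕ) (l : ℕ → E) (τv : ℕ → ℕ+) (d : ℕ+) (j : E) :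
    renewalCylinder (n + 1) (Function.update l (n + 1) j) (Function.update τv n d) =
      renewalCylinder n l τv ∩ {ω | (ω n).2 = d ∧ (ω (n + 1)).1 = j} := by
  ext ω
  simp only [renewalCylinder, Set.mem_inter_iff, Set.mem_ofPred_eq]
  constructor
  · rintro ⟨hl, hτ⟩
    refine ⟨⟨fun k hk => ?_, fun k hk => ?_⟩, by simpa using hτ n n.lt_succ_self,
      by simpa using hl (n + 1) le_rfl⟩
    · simpa [Function.update_of_ne (show k ≠ n + 1 by omega)] using hl k (by omega)
    · simpa [Function.update_of_ne (show k ≠ n by omega)] using hτ k (by omega)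
  · rintro ⟨⟨hl, hτ⟩, hd, hj⟩
    refine ⟨fun k hk => ?_, fun k hk => ?_⟩
    · rcases hk.lt_or_eq with hk | rfl
      · rw [Function.update_of_ne (by omega)]; exact hl k (by omega)
      · rwa [Function.update_self]
    · rcases (Nat.lt_succ_iff.mp hk).lt_or_eq with hk | rfl
      · rw [Function.update_of_ne (by omega)]; exact hτ k hk
      · rwa [Function.update_self]

section PathCylinder

variable [DecidableEq E] {s : ℕ → E} {t : ℕ} {ω : ℕ → E × ℕ+}

noncomputable def embeddedState (s : ℕ → E) (t k : ℕ) : E := s (jumpTime s t k)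

noncomputable def embeddedSojourn (s : ℕ → E) (t k : ℕ) : ℕ+ :=
  (jumpTime s t (k + 1) - jumpTime s t k).toPNat'

noncomputable def pathCylinder (s : ℕ → E) (t : ℕ) : Set (ℕ → E × ℕ+) :=
  renewalCylinder (numJumps s t) (embeddedState s t) (embeddedSojourn s t)

lemma coe_embeddedSojourn {k : ℕ} (hk : k < numJumps s t) :
    (embeddedSojourn s t k : ℕ) = jumpTime s t (k + 1) - jumpTime s t k :=
  PNat.toPNat'_coe (Nat.sub_pos_of_lt (jumpTime_lt_jumpTime_succ s t hk))

lemma tauProc_eq_jumpTime (h : ω ∈ pathCylinder s t) :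
    ∀ k ≤ numJumps s t, tauProc ω k = jumpTime s t k
  | 0, _ => rfl
  | k + 1, hk => by
    rw [tauProc_succ, tauProc_eq_jumpTime h k (by omega), h.2 k hk, coe_embeddedSojourn hk]
    have := jumpTime_lt_jumpTime_succ s t hk
    omega

lemma tauProc_numJumps_add_holdDur (h : ω ∈ pathCylinder s t) :
    tauProc ω (numJumps s t) + holdDur s t = t := by
  rw [tauProc_eq_jumpTime h _ le_rfl, holdDur]
  have := jumpTime_le s t le_rfl
  omega

lemma mem_pathCylinder_of_SProc_eq (hL : ∀ k, (ω (k + 1)).1 ≠ (ω k).1)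
    (hS : ∀ r ≤ t, SProc ω r = s r) :
    ω ∈ pathCylinder s t ∧ holdDur s t < (ω (numJumps s t)).2 := by
  have hJ : insert 0 (jumpSet s t) = (range (NProc ω t + 1)).image (tauProc ω) := by
    rw [jumpSet_congr t fun r hr => (hS r hr).symm]
    exact insert_zero_jumpSet_SProc hL t
  obtain ⟨hm, hτ⟩ := numJumps_eq_and_jumpTime_eq s t (tauProc_strictMono ω) hJ
  have hcyl : ω ∈ pathCylinder s t := by
    refine ⟨fun k hk => ?_, fun k hk => PNat.coe_injective ?_⟩
    · rw [hm] at hk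
      rw [embeddedState, hτ k hk, ← hS _ (tauProc_le_iff_le_NProc.mpr hk), SProc_tauProc]
    · rw [coe_embeddedSojourn hk, hτ _ (hm ▸ hk), hτ _ (hm ▸ hk.le), tauProc_succ]
      omega
  have h₁ := tauProc_numJumps_add_holdDur hcyl
  have h₂ := lt_tauProc_NProc_succ (ω := ω) t
  rw [← hm, tauProc_succ] at h₂
  exact ⟨hcyl, by omega⟩

lemma SProc_eq_of_mem_pathCylinder (hL : ∀ k, (ω (k + 1)).1 ≠ (ω k).1)
    (hcyl : ω ∈ pathCylinder s t) (hT : holdDur s t < (ω (numJumps s t)).2) :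
    ∀ r ≤ t, SProc ω r = s r := by
  have hτ := tauProc_eq_jumpTime hcyl
  have hτm := tauProc_numJumps_add_holdDur hcyl
  have hN : NProc ω t = numJumps s t := NProc_eq (by omega) (by rw [tauProc_succ]; omega)
  have hJ : jumpSet (SProc ω) t = jumpSet s t := by
    have := insert_zero_jumpSet_SProc hL t
    rw [hN, image_congr fun k hk => hτ k (Nat.lt_succ_iff.mp (mem_range.mp hk)),
      image_jumpTime_range] at this
    rw [← erase_insert (zero_notMem_jumpSet (SProc ω) t), this,
      erase_insert (zero_notMem_jumpSet s t)]
  refine fun r hr => (eq_of_jumpSet_eq t hJ.symm (fun r hr => ?_) r hr).symm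
  obtain ⟨k, hk, rfl⟩ := exists_jumpTime_eq s t hr
  rw [← hτ k hk, SProc_tauProc, hcyl.1 k hk, embeddedState, hτ k hk]

lemma pathEvent_iff (hL : ∀ k, (ω (k + 1)).1 ≠ (ω k).1) :
    (∀ r ≤ t, SProc ω r = s r) ↔
      ω ∈ pathCylinder s t ∩ {ω | holdDur s t < (ω (numJumps s t)).2} :=
  ⟨mem_pathCylinder_of_SProc_eq hL, fun h => SProc_eq_of_mem_pathCylinder hL h.1 h.2⟩

lemma fst_numJumps_of_mem_pathCylinder (h : ω ∈ pathCylinder s t) : (ω (numJumps s t)).1 = s t := by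
  rw [h.1 _ le_rfl, embeddedState, apply_jumpTime_numJumps s t]

lemma SProc_succ_of_lt_sojourn (h : ω ∈ pathCylinder s t)
    (hT : holdDur s t + 1 < (ω (numJumps s t)).2) : SProc ω (t + 1) = s t := by
  have := tauProc_numJumps_add_holdDur h
  rw [SProc_eq (n := numJumps s t) (by omega) (by rw [tauProc_succ]; omega),
    fst_numJumps_of_mem_pathCylinder h]

lemma SProc_succ_of_sojourn_eq (h : ω ∈ pathCylinder s t)
    (hT : ((ω (numJumps s t)).2 : ℕ) = holdDur s t + 1) :
    SProc ω (t + 1) = (ω (numJumps s t + 1)).1 := by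
  have := tauProc_numJumps_add_holdDur h
  have hτ : tauProc ω (numJumps s t + 1) = t + 1 := by rw [tauProc_succ]; omega
  rw [← hτ, SProc_tauProc]

lemma stayEvent_iff (hL : ∀ k, (ω (k + 1)).1 ≠ (ω k).1) :
    ((∀ r ≤ t, SProc ω r = s r) ∧ SProc ω (t + 1) = s t) ↔
      ω ∈ pathCylinder s t ∩ {ω | holdDur s t + 1 < (ω (numJumps s t)).2} := by
  rw [pathEvent_iff hL, Set.mem_inter_iff, Set.mem_inter_iff, Set.mem_ofPred_eq, Set.mem_ofPred_eq]
  constructor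
  · rintro ⟨⟨hcyl, hT⟩, hS⟩
    refine ⟨hcyl, lt_of_le_of_ne hT fun hT' => ?_⟩
    rw [SProc_succ_of_sojourn_eq hcyl hT'.symm, ← fst_numJumps_of_mem_pathCylinder hcyl] at hS
    exact hL _ hS
  · rintro ⟨hcyl, hT⟩
    exact ⟨⟨hcyl, by omega⟩, SProc_succ_of_lt_sojourn hcyl hT⟩

lemma jumpEvent_iff (hL : ∀ k, (ω (k + 1)).1 ≠ (ω k).1) {j : E} (hj : j ≠ s t) :
    ((∀ r ≤ t, SProc ω r = s r) ∧ SProc ω (t + 1) = j) ↔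
      ω ∈ pathCylinder s t ∩
        {ω | (ω (numJumps s t)).2 = (holdDur s t).succPNat ∧ (ω (numJumps s t + 1)).1 = j} := by
  rw [pathEvent_iff hL, Set.mem_inter_iff, Set.mem_inter_iff, Set.mem_ofPred_eq, Set.mem_ofPred_eq,
    ← PNat.coe_inj, Nat.succPNat_coe]
  constructor
  · rintro ⟨⟨hcyl, hT⟩, hS⟩
    have hT' : ((ω (numJumps s t)).2 : ℕ) = holdDur s t + 1 := by
      by_contra hne
      exact hj (hS.symm.trans (SProc_succ_of_lt_sojourn hcyl (by omega)))
    exact ⟨hcyl, hT', (SProc_succ_of_sojourn_eq hcyl hT').symm.trans hS⟩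
  · rintro ⟨hcyl, hT, hj'⟩
    exact ⟨⟨hcyl, by omega⟩, (SProc_succ_of_sojourn_eq hcyl hT).trans hj'⟩

end PathCylinder

lemma survF_le_one {F : E → ℕ+ → ℝ≥0∞} {i : E} (hF : ∑' u, F i u = 1) (a : ℕ) :
    survF F i a ≤ 1 :=
  hF ▸ ENNReal.tsum_le_tsum fun u => by split_ifs <;> simp

lemma measure_setOf_eq_of_ae_iff {α : Type*} [MeasurableSpace α] {μ : Measure α} {p : α → Prop}
    {A : Set α} (h : ∀ᵐ x ∂μ, p x ↔ x ∈ A) : μ {x | p x} = μ A :=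
  measure_congr (Filter.eventuallyEq_set.mpr h)

section RenewalLaw

variable [DecidableEq E] {P : E → E → ℝ≥0∞} {F : E → ℕ+ → ℝ≥0∞} {l₀ : E}

noncomputable def renewalWeight (P : E → E → ℝ≥0∞) (F : E → ℕ+ → ℝ≥0∞) (l₀ : E) (n : ℕ)
    (l : ℕ → E) (τv : ℕ → ℕ+) : ℝ≥0∞ :=
  (if l 0 = l₀ then 1 else 0) * ∏ k ∈ range n, (P (l k) (l (k + 1)) * F (l k) (τv k))

def IsMarkovRenewalLaw [MeasurableSpace E] (P : E → E → ℝ≥0∞) (F : E → ℕ+ → ℝ≥0∞) (l₀ : E)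
    (μ : Measure (ℕ → E × ℕ+)) : Prop :=
  ∀ n l τv, μ (renewalCylinder n l τv) = renewalWeight P F l₀ n l τv

lemma renewalWeight_succ (n : ℕ) (l : ℕ → E) (τv : ℕ → ℕ+) :
    renewalWeight P F l₀ (n + 1) l τv =
      renewalWeight P F l₀ n l τv * (P (l n) (l (n + 1)) * F (l n) (τv n)) := by
  rw [renewalWeight, renewalWeight, prod_range_succ, mul_assoc]

lemma renewalWeight_congr {n : ℕ} {l l' : ℕ → E} {τv τv' : ℕ → ℕ+} (hl : ∀ k ≤ n, l k = l' k)
    (hτ : ∀ k < n, τv k = τv' k) : renewalWeight P F l₀ n l τv = renewalWeight P F l₀ n l' τv' := by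
  rw [renewalWeight, renewalWeight, hl 0 (Nat.zero_le n)]
  congr 1
  refine prod_congr rfl fun k hk => ?_
  rw [mem_range] at hk
  rw [hl k hk.le, hl (k + 1) hk, hτ k hk]

lemma renewalWeight_eq_zero (hPii : ∀ i, P i i = 0) {n k : ℕ} (hk : k < n) {l : ℕ → E}
    (hl : l (k + 1) = l k) (τv : ℕ → ℕ+) : renewalWeight P F l₀ n l τv = 0 :=
  mul_eq_zero_of_right _ (prod_eq_zero (mem_range.mpr hk) (by rw [hl, hPii, zero_mul]))

lemma renewalWeight_succ_update (n : ℕ) (l : ℕ → E) (τv : ℕ → ℕ+) (d : ℕ+) (j : E) :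
    renewalWeight P F l₀ (n + 1) (Function.update l (n + 1) j) (Function.update τv n d) =
      renewalWeight P F l₀ n l τv * F (l n) d * P (l n) j := by
  rw [renewalWeight_succ, Function.update_self, Function.update_self,
    Function.update_of_ne (show n ≠ n + 1 by omega),
    renewalWeight_congr (l' := l) (τv' := τv) (fun k hk => Function.update_of_ne (by omega) _ _)
      (fun k hk => Function.update_of_ne (by omega) _ _)]
  ring

section Measure

variable [MeasurableSpace E] {μ : Measure (ℕ → E × ℕ+)}

lemma IsMarkovRenewalLaw.measure_inter_jump (hμ : IsMarkovRenewalLaw P F l₀ μ) (n : ℕ)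
    (l : ℕ → E) (τv : ℕ → ℕ+) (d : ℕ+) (j : E) :
    μ (renewalCylinder n l τv ∩ {ω | (ω n).2 = d ∧ (ω (n + 1)).1 = j}) =
      renewalWeight P F l₀ n l τv * F (l n) d * P (l n) j := by
  rw [← renewalCylinder_succ_update, hμ, renewalWeight_succ_update]

variable [Countable E]

lemma IsMarkovRenewalLaw.measure_state_succ_eq (hμ : IsMarkovRenewalLaw P F l₀ μ)
    (hPii : ∀ i, P i i = 0) (k : ℕ) : μ {ω | (ω (k + 1)).1 = (ω k).1} = 0 := by
  let piece (c : Fin (k + 2) → E × ℕ+) : Set (ℕ → E × ℕ+) :=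
    {ω | (ω (k + 1)).1 = (ω k).1 ∧ ∀ i : Fin (k + 2), ω i = c i}
  have hunion : {ω : ℕ → E × ℕ+ | (ω (k + 1)).1 = (ω k).1} = ⋃ c, piece c := by
    ext ω
    simp only [piece, Set.mem_iUnion, Set.mem_ofPred_eq]
    exact ⟨fun h => ⟨fun i => ω i, h, fun _ => rfl⟩, fun ⟨_, h, _⟩ => h⟩
  rw [hunion, measure_iUnion_null_iff]
  intro c
  rcases (piece c).eq_empty_or_nonempty with h | ⟨ω₀, h₀, hc₀⟩
  · rw [h, measure_empty]
  -- the paths of `piece c` agree with `ω₀` up to index `k + 1`, a cylinder of weight zero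
  refine measure_mono_null (t := renewalCylinder (k + 1) (fun i => (ω₀ i).1) (fun i => (ω₀ i).2))
    (fun ω ⟨_, hc⟩ => ?_) ?_
  · have hω : ∀ i ≤ k + 1, ω i = ω₀ i := fun i hi =>
      (hc ⟨i, by omega⟩).trans (hc₀ ⟨i, by omega⟩).symm
    exact ⟨fun i hi => by rw [hω i hi], fun i hi => by rw [hω i hi.le]⟩
  · rw [hμ]
    exact renewalWeight_eq_zero hPii k.lt_succ_self h₀ _

lemma IsMarkovRenewalLaw.ae_state_succ_ne (hμ : IsMarkovRenewalLaw P F l₀ μ)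
    (hPii : ∀ i, P i i = 0) : ∀ᵐ ω ∂μ, ∀ k, (ω (k + 1)).1 ≠ (ω k).1 :=
  ae_all_iff.mpr fun k => measure_eq_zero_iff_ae_notMem.mp (hμ.measure_state_succ_eq hPii k)

variable [MeasurableSingletonClass E]

lemma IsMarkovRenewalLaw.measure_inter_sojourn_eq (hμ : IsMarkovRenewalLaw P F l₀ μ)
    (hP : ∀ i, ∑' j, P i j = 1) (n : ℕ) (l : ℕ → E) (τv : ℕ → ℕ+) (d : ℕ+) :
    μ (renewalCylinder n l τv ∩ {ω | (ω n).2 = d}) = renewalWeight P F l₀ n l τv * F (l n) d := by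
  have hunion : renewalCylinder n l τv ∩ {ω | (ω n).2 = d} =
      ⋃ j, renewalCylinder n l τv ∩ {ω | (ω n).2 = d ∧ (ω (n + 1)).1 = j} := by
    ext ω
    simp
  rw [hunion, measure_iUnion, tsum_congr (hμ.measure_inter_jump n l τv d), ENNReal.tsum_mul_left,
    hP, mul_one]
  · exact fun i j hij => Set.disjoint_left.mpr fun ω h₁ h₂ => hij (h₁.2.2.symm.trans h₂.2.2)
  · exact fun j => renewalCylinder_succ_update n l τv d j ▸ measurableSet_renewalCylinder _ _ _

lemma IsMarkovRenewalLaw.measure_inter_lt_sojourn (hμ : IsMarkovRenewalLaw P F l₀ μ)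
    (hP : ∀ i, ∑' j, P i j = 1) (n : ℕ) (l : ℕ → E) (τv : ℕ → ℕ+) (a : ℕ) :
    μ (renewalCylinder n l τv ∩ {ω | a < (ω n).2}) =
      renewalWeight P F l₀ n l τv * survF F (l n) a := by
  have hunion : renewalCylinder n l τv ∩ {ω | a < (ω n).2} =
      ⋃ d : ℕ+, renewalCylinder n l τv ∩ {ω | (ω n).2 = d} ∩ {_ω | a < d} := by
    ext ω
    simp
  rw [hunion, measure_iUnion, survF, ← ENNReal.tsum_mul_left]
  · refine tsum_congr fun d => ?_
    by_cases had : a < (d : ℕ)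
    · simp [had, hμ.measure_inter_sojourn_eq hP]
    · simp [had]
  · exact fun d d' hdd' => Set.disjoint_left.mpr fun ω h₁ h₂ => hdd' (h₁.1.2.symm.trans h₂.1.2)
  · intro d
    have hsojourn : MeasurableSet {ω : ℕ → E × ℕ+ | (ω n).2 = d} :=
      (measurable_snd.comp (measurable_pi_apply n)) (MeasurableSpace.measurableSet_top (s := {d}))
    exact ((measurableSet_renewalCylinder n l τv).inter hsojourn).inter (.const _)

end Measure

end RenewalLaw

theorem semiMarkov_one_step_predictive_general
    [Countable E] [DecidableEq E]
    [MeasurableSpace E] [MeasurableSingletonClass E]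
    (P : E → E → ENNReal) (hProw : ∀ i, ∑' j, P i j = 1) (hPii : ∀ i, P i i = 0)
    (F : E → ℕ+ → ENNReal) (hFpmf : ∀ i, ∑' u, F i u = 1)
    (l₀ : E) (μ : Measure (ℕ → E × ℕ+))
    (hμ : ∀ (n : ℕ) (l : ℕ → E) (τv : ℕ → ℕ+),
      μ {ω | (∀ k ≤ n, (ω k).1 = l k) ∧ (∀ k < n, (ω k).2 = τv k)} =
        (if l 0 = l₀ then 1 else 0) *
          ∏ k ∈ Finset.range n, (P (l k) (l (k + 1)) * F (l k) (τv k)))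
    (t : ℕ) (s : ℕ → E)
    (hpos : 0 < survF F (s t) (holdDur s t)) :
    (μ {ω | (∀ r ≤ t, SProc ω r = s r) ∧ SProc ω (t + 1) = s t} =
      μ {ω | ∀ r ≤ t, SProc ω r = s r} *
        survF F (s t) (holdDur s t + 1) / survF F (s t) (holdDur s t)) ∧
    (∀ j : E, j ≠ s t →
      μ {ω | (∀ r ≤ t, SProc ω r = s r) ∧ SProc ω (t + 1) = j} =
        μ {ω | ∀ r ≤ t, SProc ω r = s r} *
          (F (s t) (holdDur s t).succPNat / survF F (s t) (holdDur s t)) *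
          P (s t) j) := by
  have hlaw : IsMarkovRenewalLaw P F l₀ μ := hμ
  have hL := hlaw.ae_state_succ_ne hPii
  have hlast : embeddedState s t (numJumps s t) = s t := apply_jumpTime_numJumps s t
  have hsurv₀ : survF F (s t) (holdDur s t) ≠ 0 := hpos.ne'
  have hsurv_top : survF F (s t) (holdDur s t) ≠ ⊤ :=
    ne_top_of_le_ne_top ENNReal.one_ne_top (survF_le_one (hFpmf (s t)) _)
  have hpast : μ {ω | ∀ r ≤ t, SProc ω r = s r} =
      renewalWeight P F l₀ (numJumps s t) (embeddedState s t) (embeddedSojourn s t) *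
        survF F (s t) (holdDur s t) := by
    rw [measure_setOf_eq_of_ae_iff (hL.mono fun _ h => pathEvent_iff h), pathCylinder,
      hlaw.measure_inter_lt_sojourn hProw, hlast]
  refine ⟨?_, fun j hj => ?_⟩
  · rw [measure_setOf_eq_of_ae_iff (hL.mono fun _ h => stayEvent_iff h), pathCylinder,
      hlaw.measure_inter_lt_sojourn hProw, hlast, hpast, mul_right_comm,
      ENNReal.mul_div_cancel_right hsurv₀ hsurv_top]
  · rw [measure_setOf_eq_of_ae_iff (hL.mono fun _ h => jumpEvent_iff h hj), pathCylinder,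
      hlaw.measure_inter_jump, hlast, hpast, mul_assoc _ (survF _ _ _),
      ENNReal.mul_div_cancel hsurv₀ hsurv_top]

/-- For every `t ≥ 0` and every path `s_{0:t}` with `s 0 = l₀` and
`F^{s_t}((l(t),∞)) > 0`:
(i)  `μ(S_{0:t} = s_{0:t}, S_{t+1} = s_t)
       = μ(S_{0:t} = s_{0:t}) ⬝ F^{s_t}((x(t),∞)) / F^{s_t}((l(t),∞))`;
(ii) for `j ≠ s_t`, `μ(S_{0:t} = s_{0:t}, S_{t+1} = j)
       = μ(S_{0:t} = s_{0:t}) ⬝ [F^{s_t}({x(t)}) / F^{s_t}((l(t),∞))] ⬝ P^{s_t, j}`,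
where `x(t) = l(t) + 1`.  In particular the one-step predictive law of `S` given its past
depends only on the current state and the current holding duration. -/
theorem semiMarkov_one_step_predictive
    [Nonempty E] [Countable E] [DecidableEq E]
    [MeasurableSpace E] [MeasurableSingletonClass E]
    (P : E → E → ENNReal) (hProw : ∀ i, ∑' j, P i j = 1) (hPii : ∀ i, P i i = 0)
    (F : E → ℕ+ → ENNReal) (hFpmf : ∀ i, ∑' u, F i u = 1)
    (l₀ : E) (μ : Measure (ℕ → E × ℕ+)) [IsProbabilityMeasure μ]
    (hμ : ∀ (n : ℕ) (l : ℕ → E) (τv : ℕ → ℕ+),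
      μ {ω | (∀ k ≤ n, (ω k).1 = l k) ∧ (∀ k < n, (ω k).2 = τv k)} =
        (if l 0 = l₀ then 1 else 0) *
          ∏ k ∈ Finset.range n, (P (l k) (l (k + 1)) * F (l k) (τv k)))
    (t : ℕ) (s : ℕ → E) (hs0 : s 0 = l₀)
    (hpos : 0 < survF F (s t) (holdDur s t)) :
    (μ {ω | (∀ r ≤ t, SProc ω r = s r) ∧ SProc ω (t + 1) = s t} =
      μ {ω | ∀ r ≤ t, SProc ω r = s r} *
        survF F (s t) (holdDur s t + 1) / survF F (s t) (holdDur s t)) ∧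
    (∀ j : E, j ≠ s t →
      μ {ω | (∀ r ≤ t, SProc ω r = s r) ∧ SProc ω (t + 1) = j} =
        μ {ω | ∀ r ≤ t, SProc ω r = s r} *
          (F (s t) (holdDur s t).succPNat / survF F (s t) (holdDur s t)) *
          P (s t) j) :=
  semiMarkov_one_step_predictive_general P hProw hPii F hFpmf l₀ μ hμ t s hpos
end

section
/- For every integer t ≥ 1, ∫ ∏_{k=1}^t (1 − u_k) dΠ_{c,F0}(u) = F0((t,∞)), and consequently ∫ F_u({t}) dΠ_{c,F0}(u) = F0({t}); that is, the beta-Stacy process BS(c, F0) has mean F0. -/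
open MeasureTheory

/-! # Setup

The (discrete-time) beta-Stacy process `BS(c, F0)` is represented through its
stick-breaking coordinates: `Π_{c,F0}` is the product probability measure on
`[0,1]^{ℕ+}` whose `t`-th coordinate is `Beta(c(t)F0({t}), c(t)F0((t,∞)))`, and for
`u ∈ [0,1]^{ℕ+}` one sets `F_u((t,∞)) = ∏_{k=1}^t (1-u_k)` and
`F_u({t}) = u_t ∏_{k=1}^{t-1} (1-u_k)`.

The measure `Π` is characterized by its finite-dimensional cylinder values
(hypothesis `hQ` below). -/

/-- The Beta distribution with parameters `a, b > 0`, as a measure on `ℝ`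
(supported on `(0,1)`). -/
noncomputable def betaMeasure (a b : ℝ) : Measure ℝ :=
  (volume.restrict (Set.Ioo (0 : ℝ) 1)).withDensity
    (fun x => ENNReal.ofReal
      (Real.Gamma (a + b) / (Real.Gamma a * Real.Gamma b) * x ^ (a - 1) * (1 - x) ^ (b - 1)))

/-- `F0((t,∞)) = ∑_{s > t} F0({s})`. -/
noncomputable def survF0 (F0 : ℕ+ → ℝ) (t : ℕ) : ℝ :=
  ∑' s : ℕ+, if t < (s : ℕ) then F0 s else 0

/-!
The cylinder hypothesis identifies `Q` with the product measure `Measure.infinitePi`, so the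
coordinates are independent and the integral of `∏_{k ≤ t} (1 - u_k)` is the product of the Beta
means `∫ (1 - u_k) = F0((k,∞)) / F0((k-1,∞))`, which telescopes to `F0((t,∞))`. The second
identity then follows by linearity from `F_u({t}) = F_u((t-1,∞)) - F_u((t,∞))`.
-/

open Finset
open Set (Ioo)
open ProbabilityTheory (beta)

section Beta

variable {a b : ℝ}

theorem integral_Ioo_rpow_mul_one_sub_rpow (ha : 0 < a) (hb : 0 < b) :
    ∫ x in Ioo (0 : ℝ) 1, x ^ (a - 1) * (1 - x) ^ (b - 1) = beta a b := by
  have hint := intervalIntegrable_iff_integrableOn_Ioo_of_le zero_le_one |>.mp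
    (Complex.betaIntegral_convergent (u := a) (v := b) (by simpa) (by simpa))
  rw [ProbabilityTheory.beta_eq_betaIntegralReal a b ha hb, Complex.betaIntegral,
    intervalIntegral.integral_of_le zero_le_one, integral_Ioc_eq_integral_Ioo,
    ← RCLike.re_to_complex, ← integral_re hint]
  refine setIntegral_congr_fun measurableSet_Ioo fun x ⟨hx0, hx1⟩ ↦ ?_
  norm_cast
  rw [← Complex.ofReal_cpow hx0.le, ← Complex.ofReal_cpow (by linarith), RCLike.re_to_complex,
    ← Complex.ofReal_mul, Complex.ofReal_re]

theorem beta_add_one_right (hb : b ≠ 0) (hab : a + b ≠ 0) :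
    beta a (b + 1) = b / (a + b) * beta a b := by
  rw [ProbabilityTheory.beta, ProbabilityTheory.beta, Real.Gamma_add_one hb, ← add_assoc,
    Real.Gamma_add_one hab]
  field_simp

theorem integral_rpow_mul_rpow_betaMeasure {p q : ℝ} (ha : 0 < a) (hb : 0 < b)
    (hp : 0 < a + p) (hq : 0 < b + q) :
    ∫ x, x ^ p * (1 - x) ^ q ∂betaMeasure a b = beta (a + p) (b + q) / beta a b := by
  have hC : Real.Gamma (a + b) / (Real.Gamma a * Real.Gamma b) = (beta a b)⁻¹ := by
    rw [ProbabilityTheory.beta, inv_div]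
  have hCpos : 0 < (beta a b)⁻¹ := inv_pos.2 (ProbabilityTheory.beta_pos ha hb)
  rw [betaMeasure, integral_withDensity_eq_integral_toReal_smul (by fun_prop)
    (ae_of_all _ fun _ ↦ ENNReal.ofReal_lt_top)]
  calc _ = ∫ x in Ioo (0 : ℝ) 1,
          (beta a b)⁻¹ * (x ^ (a + p - 1) * (1 - x) ^ (b + q - 1)) := by
        refine setIntegral_congr_fun measurableSet_Ioo fun x ⟨hx0, hx1⟩ ↦ ?_
        have hx1' : 0 < 1 - x := by linarith
        rw [hC, ENNReal.toReal_ofReal (by positivity), smul_eq_mul,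
          show a + p - 1 = a - 1 + p by ring, show b + q - 1 = b - 1 + q by ring,
          Real.rpow_add hx0, Real.rpow_add hx1']
        ring
    _ = beta (a + p) (b + q) / beta a b := by
        rw [integral_const_mul, integral_Ioo_rpow_mul_one_sub_rpow hp hq, inv_mul_eq_div]

theorem isProbabilityMeasure_betaMeasure (ha : 0 < a) (hb : 0 < b) :
    IsProbabilityMeasure (betaMeasure a b) := by
  have h := integral_rpow_mul_rpow_betaMeasure ha hb (p := 0) (q := 0) (by simpa) (by simpa)
  simp only [Real.rpow_zero, mul_one, add_zero, integral_const, smul_eq_mul,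
    div_self (ProbabilityTheory.beta_pos ha hb).ne'] at h
  refine ⟨(ENNReal.toReal_eq_one_iff _).mp ?_⟩
  simpa [measureReal_def] using h

theorem integral_one_sub_betaMeasure (ha : 0 < a) (hb : 0 < b) :
    ∫ x, (1 - x) ∂betaMeasure a b = b / (a + b) := by
  have h := integral_rpow_mul_rpow_betaMeasure ha hb (p := 0) (q := 1) (by simpa) (by linarith)
  simp only [Real.rpow_zero, Real.rpow_one, one_mul, add_zero] at h
  rw [h, beta_add_one_right hb.ne' (by positivity),
    mul_div_cancel_right₀ _ (ProbabilityTheory.beta_pos ha hb).ne']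

end Beta

section InfinitePi

variable {ι : Type*} {X : ι → Type*} [∀ i, MeasurableSpace (X i)]
  (μ : ∀ i, Measure (X i)) [∀ i, IsProbabilityMeasure (μ i)]

theorem integral_finset_prod_infinitePi (J : Finset ι) (f : ∀ i, X i → ℝ)
    (hf : ∀ i, Measurable (f i)) :
    ∫ u, ∏ i ∈ J, f i (u i) ∂Measure.infinitePi μ = ∏ i ∈ J, ∫ x, f i x ∂μ i := by
  have hmeas : Measurable fun v : ∀ i : J, X i ↦ ∏ i : J, f i (v i) :=
    Finset.measurable_prod _ fun i _ ↦ (hf i).comp (measurable_pi_apply i)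
  calc ∫ u, ∏ i ∈ J, f i (u i) ∂Measure.infinitePi μ
      = ∫ u, ∏ i : J, f i (J.restrict u i) ∂Measure.infinitePi μ :=
        integral_congr_ae (ae_of_all _ fun u ↦ (J.prod_coe_sort fun i ↦ f i (u i)).symm)
    _ = ∏ i : J, ∫ x, f i x ∂μ i :=
        (integral_restrict_infinitePi μ hmeas.aestronglyMeasurable).trans
          (integral_fintype_prod_eq_prod _)
    _ = ∏ i ∈ J, ∫ x, f i x ∂μ i := J.prod_coe_sort fun i ↦ ∫ x, f i x ∂μ i

theorem integral_finset_prod_of_cylinder {Q : Measure (∀ i, X i)}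
    (hQ : ∀ (J : Finset ι) (B : ∀ i, Set (X i)), (∀ i, MeasurableSet (B i)) →
      Q (Set.pi J B) = ∏ i ∈ J, μ i (B i))
    (J : Finset ι) (f : ∀ i, X i → ℝ) (hf : ∀ i, Measurable (f i)) :
    ∫ u, ∏ i ∈ J, f i (u i) ∂Q = ∏ i ∈ J, ∫ x, f i x ∂μ i := by
  rw [Measure.eq_infinitePi μ hQ, integral_finset_prod_infinitePi μ J f hf]

end InfinitePi

theorem summable_of_tsum_ne_zero {α β : Type*} [AddCommMonoid α] [TopologicalSpace α]
    {f : β → α} (h : ∑' b, f b ≠ 0) : Summable f :=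
  by_contra fun hf ↦ h (tsum_eq_zero_of_not_summable hf)

section Survival

variable {F0 : ℕ+ → ℝ}

theorem survF0_zero (F0 : ℕ+ → ℝ) : survF0 F0 0 = ∑' s, F0 s :=
  tsum_congr fun s ↦ if_pos s.pos

theorem summable_survF0_summand (hF0 : Summable F0) (n : ℕ) :
    Summable fun s : ℕ+ ↦ if n < (s : ℕ) then F0 s else 0 :=
  (hF0.indicator {s : ℕ+ | n < (s : ℕ)}).congr fun s ↦ by simp [Set.indicator_apply]

theorem survF0_eq_add (hF0 : Summable F0) (n : ℕ) :
    survF0 F0 n = F0 n.succPNat + survF0 F0 (n + 1) := by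
  rw [survF0, (summable_survF0_summand hF0 n).tsum_eq_add_tsum_ite n.succPNat,
    if_pos (by simp), survF0]
  congr 1
  refine tsum_congr fun s ↦ ?_
  have : s = n.succPNat ↔ (s : ℕ) = n + 1 := by rw [← PNat.coe_inj, Nat.succPNat_coe]
  simp only [this]
  split_ifs <;> first | rfl | omega

theorem survF0_pos (hF0 : Summable F0) (hpos : ∀ s, 0 < F0 s) (n : ℕ) : 0 < survF0 F0 n :=
  (summable_survF0_summand hF0 n).tsum_pos (fun s ↦ by split_ifs <;> simp [(hpos s).le])
    n.succPNat (by simp [hpos])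

end Survival

section BetaStacy

noncomputable def betaStacyMarginal (c F0 : ℕ+ → ℝ) (k : ℕ+) : Measure ℝ :=
  betaMeasure (c k * F0 k) (c k * survF0 F0 k)

variable {c F0 : ℕ+ → ℝ}

theorem isProbabilityMeasure_betaStacyMarginal (hc : ∀ s, 0 < c s) (hF0 : ∀ s, 0 < F0 s)
    (hsum : Summable F0) (k : ℕ+) : IsProbabilityMeasure (betaStacyMarginal c F0 k) :=
  isProbabilityMeasure_betaMeasure (mul_pos (hc k) (hF0 k))
    (mul_pos (hc k) (survF0_pos hsum hF0 k))

theorem integral_one_sub_betaStacyMarginal (hc : ∀ s, 0 < c s) (hF0 : ∀ s, 0 < F0 s)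
    (hsum : Summable F0) (n : ℕ) :
    ∫ x, (1 - x) ∂betaStacyMarginal c F0 n.succPNat = survF0 F0 (n + 1) / survF0 F0 n := by
  rw [betaStacyMarginal, integral_one_sub_betaMeasure (mul_pos (hc _) (hF0 _))
    (mul_pos (hc _) (survF0_pos hsum hF0 _)), Nat.succPNat_coe, ← mul_add,
    ← survF0_eq_add hsum, mul_div_mul_left _ _ (hc _).ne']

theorem integral_prod_one_sub_eq_survF0 (hc : ∀ s, 0 < c s) (hF0 : ∀ s, 0 < F0 s)
    (hF0sum : ∑' s, F0 s = 1) {Q : Measure (ℕ+ → ℝ)}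
    (hQ : ∀ (J : Finset ℕ+) (B : ℕ+ → Set ℝ), (∀ k, MeasurableSet (B k)) →
      Q (Set.pi J B) = ∏ k ∈ J, betaStacyMarginal c F0 k (B k))
    (n : ℕ) : ∫ u, ∏ k ∈ range n, (1 - u k.succPNat) ∂Q = survF0 F0 n := by
  have hsum : Summable F0 := summable_of_tsum_ne_zero (by simp [hF0sum])
  have := isProbabilityMeasure_betaStacyMarginal hc hF0 hsum
  have hinj : Set.InjOn Nat.succPNat (range n) := fun a _ b _ h ↦ Nat.succPNat_inj.mp h
  calc ∫ u, ∏ k ∈ range n, (1 - u k.succPNat) ∂Q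
      = ∫ u, ∏ k ∈ (range n).image Nat.succPNat, (1 - u k) ∂Q :=
        integral_congr_ae (ae_of_all _ fun u ↦ (prod_image (f := fun k ↦ 1 - u k) hinj).symm)
    _ = ∏ k ∈ (range n).image Nat.succPNat, ∫ x, (1 - x) ∂betaStacyMarginal c F0 k :=
        integral_finset_prod_of_cylinder _ hQ _ (fun _ x ↦ 1 - x) fun _ ↦ by fun_prop
    _ = ∏ j ∈ range n, survF0 F0 (j + 1) / survF0 F0 j := by
        rw [prod_image hinj]
        exact prod_congr rfl fun j _ ↦ integral_one_sub_betaStacyMarginal hc hF0 hsum j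
    _ = survF0 F0 n := prod_range_induction _ _ (by rw [survF0_zero, hF0sum]) n
        fun k _ ↦ (mul_div_cancel₀ _ (survF0_pos hsum hF0 k).ne').symm

end BetaStacy

theorem betaStacy_mean_general
    (c : ℕ+ → ℝ) (hc : ∀ s, 0 < c s)
    (F0 : ℕ+ → ℝ) (hF0 : ∀ s, 0 < F0 s) (hF0sum : ∑' s, F0 s = 1)
    (Q : Measure (ℕ+ → ℝ))
    (hQ : ∀ (J : Finset ℕ+) (B : ℕ+ → Set ℝ), (∀ k, MeasurableSet (B k)) →
      Q {u | ∀ k ∈ J, u k ∈ B k} =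
        ∏ k ∈ J, betaMeasure (c k * F0 k) (c k * survF0 F0 k) (B k))
    (t : ℕ+) :
    (∫ u, (∏ k ∈ Finset.range (t : ℕ), (1 - u k.succPNat)) ∂Q) = survF0 F0 t ∧
    (∫ u, (u t * ∏ k ∈ Finset.range ((t : ℕ) - 1), (1 - u k.succPNat)) ∂Q) = F0 t := by
  have hsurv := integral_prod_one_sub_eq_survF0 hc hF0 hF0sum hQ
  have hsum : Summable F0 := summable_of_tsum_ne_zero (by simp [hF0sum])
  refine ⟨hsurv t, ?_⟩
  have hintegrable (n : ℕ) : Integrable (fun u ↦ ∏ k ∈ range n, (1 - u k.succPNat)) Q :=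
    .of_integral_ne_zero (by rw [hsurv]; exact (survF0_pos hsum hF0 n).ne')
  obtain ⟨m, rfl⟩ : ∃ m : ℕ, t = m.succPNat := ⟨t.natPred, t.succPNat_natPred.symm⟩
  calc ∫ u, u m.succPNat * ∏ k ∈ range (m.succPNat - 1), (1 - u k.succPNat) ∂Q
      = ∫ u, (∏ k ∈ range m, (1 - u k.succPNat)) -
          ∏ k ∈ range (m + 1), (1 - u k.succPNat) ∂Q := by
        refine integral_congr_ae (ae_of_all _ fun u ↦ ?_)
        simp only [Nat.succPNat_coe, Nat.succ_sub_one, prod_range_succ]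
        ring
    _ = survF0 F0 m - survF0 F0 (m + 1) := by
        rw [integral_sub (hintegrable m) (hintegrable (m + 1)), hsurv, hsurv]
    _ = F0 m.succPNat := by rw [survF0_eq_add hsum m]; ring

/-- For every integer `t ≥ 1`,
`∫ ∏_{k=1}^t (1 - u_k) dΠ_{c,F0}(u) = F0((t,∞))`, and consequently
`∫ F_u({t}) dΠ_{c,F0}(u) = F0({t})`: the beta-Stacy process `BS(c, F0)` has mean `F0`. -/
theorem betaStacy_mean
    (c : ℕ+ → ℝ) (hc : ∀ s, 0 < c s)
    (F0 : ℕ+ → ℝ) (hF0 : ∀ s, 0 < F0 s) (hF0sum : ∑' s, F0 s = 1)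
    (Q : Measure (ℕ+ → ℝ)) [IsProbabilityMeasure Q]
    (hQ : ∀ (J : Finset ℕ+) (B : ℕ+ → Set ℝ), (∀ k, MeasurableSet (B k)) →
      Q {u | ∀ k ∈ J, u k ∈ B k} =
        ∏ k ∈ J, betaMeasure (c k * F0 k) (c k * survF0 F0 k) (B k))
    (t : ℕ+) :
    (∫ u, (∏ k ∈ Finset.range (t : ℕ), (1 - u k.succPNat)) ∂Q) = survF0 F0 t ∧
    (∫ u, (u t * ∏ k ∈ Finset.range ((t : ℕ) - 1), (1 - u k.succPNat)) ∂Q) = F0 t :=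
  betaStacy_mean_general c hc F0 hF0 hF0sum Q hQ t
end

section
/- (Finite-dimensional law and exchangeability of the generalized Pólya urn.) For every n ≥ 1 and every l_{1:n} ∈ E^n, ν(L_1 = l_1, …, L_n = l_n) = [∏_{i∈E} ∏_{h=0}^{n_i−1}(m({i}) + h)] / ∏_{h=0}^{n−1}(m(E) + h), where n_i = #{k ≤ n : l_k = i} (the product over i has finitely many factors ≠ 1). In particular this probability is invariant under every permutation of (l_1,…,l_n), so the Pólya sequence (L_n)_{n≥1} is exchangeable. -/
open MeasureTheory

section Aux

variable {E : Type*} [DecidableEq E]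

lemma polya_count_succ (l : ℕ → E) (n : ℕ) (i : E) :
    ((Finset.range (n + 1)).filter (fun k => l k = i)).card =
      ((Finset.range n).filter (fun k => l k = i)).card + (if l n = i then 1 else 0) := by
  by_cases h : l n = i <;>
    simp [Finset.range_add_one, Finset.filter_insert, h, Finset.card_insert_of_notMem]

end Aux

/-! # Setup

`E` is a nonempty countable state space and `m` a measure on `E` (encoded by its mass
function `m : E → ℝ≥0∞`) with `0 < m(E) < ∞`.  `ν` is the law on `E^{ℕ+}` (paths
`ω : ℕ → E`, `ω (k-1)` being the `k`-th draw `L_k`) of the generalized Pólya urn sequence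
with initial composition `m`, characterized by its predictive distributions
`ν(L_{n+1} = i | L_1, …, L_n) = (m({i}) + ∑_{h=1}^n 1{L_h = i})/(m(E) + n)`
(hypothesis `hν`; the case `n = 0` gives `ν(L_1 = i) = m({i})/m(E)`). -/

/-- **finite-dimensional law and exchangeability of the Pólya urn.**
For every `n ≥ 1` and `l_{1:n} ∈ E^n`,
`ν(L_1 = l_1, …, L_n = l_n) = [∏_{i∈E} ∏_{h=0}^{n_i-1} (m({i}) + h)] / ∏_{h=0}^{n-1} (m(E) + h)`
with `n_i = #{k ≤ n : l_k = i}` (the product over `i` has finitely many factors `≠ 1`).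
In particular this probability is invariant under every permutation of `(l_1, …, l_n)`,
so the Pólya sequence is exchangeable. -/
theorem polya_urn_finite_dim_law_and_exchangeable
    {E : Type*} [Nonempty E] [Countable E] [DecidableEq E]
    [MeasurableSpace E] [MeasurableSingletonClass E]
    (m : E → ENNReal) (hpos : 0 < ∑' i, m i) (hfin : ∑' i, m i ≠ ⊤)
    (ν : Measure (ℕ → E)) [IsProbabilityMeasure ν]
    (hν : ∀ (n : ℕ) (l : ℕ → E),
      ν {ω | ∀ k < n + 1, ω k = l k} =
        ν {ω | ∀ k < n, ω k = l k} *
          ((m (l n) + ((Finset.range n).filter (fun h => l h = l n)).card) /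
            ((∑' i, m i) + n))) :
    (∀ (n : ℕ) (l : ℕ → E),
      ν {ω | ∀ k < n, ω k = l k} =
        (∏' i : E,
            ∏ h ∈ Finset.range (((Finset.range n).filter (fun k => l k = i)).card),
              (m i + h)) /
          ∏ h ∈ Finset.range n, ((∑' i, m i) + h)) ∧
    (∀ (n : ℕ) (l : ℕ → E) (σ : Equiv.Perm (Fin n)),
      ν {ω | ∀ k : Fin n, ω (k : ℕ) = l (k : ℕ)} =
        ν {ω | ∀ k : Fin n, ω (k : ℕ) = l ((σ k : Fin n) : ℕ)}) := by
  set M : ENNReal := ∑' i, m i with hM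
  -- abbreviations
  set cnt : ℕ → (ℕ → E) → E → ℕ :=
    fun n l i => ((Finset.range n).filter (fun k => l k = i)).card with hcnt
  set g : ℕ → (ℕ → E) → E → ENNReal :=
    fun n l i => ∏ h ∈ Finset.range (cnt n l i), (m i + h) with hg
  have hM0 : M ≠ 0 := hpos.ne'
  have hDen : ∀ n : ℕ, (M + (n : ENNReal)) ≠ 0 ∧ (M + (n : ENNReal)) ≠ ⊤ := by
    intro n
    constructor
    · exact fun h => hM0 (by simpa using (add_eq_zero.mp h).1)
    · exact ENNReal.add_ne_top.mpr ⟨hfin, ENNReal.natCast_ne_top n⟩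
  have hB : ∀ n : ℕ,
      (∏ h ∈ Finset.range n, (M + (h : ENNReal))) ≠ 0 ∧
      (∏ h ∈ Finset.range n, (M + (h : ENNReal))) ≠ ⊤ := by
    intro n
    constructor
    · exact Finset.prod_ne_zero_iff.mpr fun h _ => (hDen h).1
    · exact (ENNReal.prod_lt_top fun h _ => (hDen h).2.lt_top).ne
  -- support of g
  have hgsupp : ∀ (n : ℕ) (l : ℕ → E) (i : E), i ∉ (Finset.range n).image l → g n l i = 1 := by
    intro n l i hi
    have : cnt n l i = 0 := by
      rw [Finset.card_eq_zero, Finset.filter_eq_empty_iff]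
      intro k hk hki
      exact hi (Finset.mem_image.mpr ⟨k, hk, hki⟩)
    simp [hg, this]
  have htprod : ∀ (n : ℕ) (l : ℕ → E) (s : Finset E), (Finset.range n).image l ⊆ s →
      (∏' i, g n l i) = ∏ i ∈ s, g n l i := by
    intro n l s hs
    exact tprod_eq_prod fun i hi => hgsupp n l i fun h => hi (hs h)
  -- main induction
  have key : ∀ (n : ℕ) (l : ℕ → E),
      ν {ω | ∀ k < n, ω k = l k} =
        (∏' i, g n l i) / ∏ h ∈ Finset.range n, (M + (h : ENNReal)) := by
    intro n
    induction n with
    | zero =>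
      intro l
      have hset : {ω : ℕ → E | ∀ k < 0, ω k = l k} = Set.univ := by
        ext ω; simp
      have h1 : (∏' i, g 0 l i) = 1 := by
        rw [htprod 0 l ∅ (by simp)]; simp
      simp [hset, h1]
    | succ n ih =>
      intro l
      rw [hν n l, ih l]
      set s : Finset E := (Finset.range (n + 1)).image l with hs
      have hsub : (Finset.range n).image l ⊆ s := by
        apply Finset.image_subset_image
        exact Finset.range_subset_range.mpr (Nat.le_succ n)
      have hmem : l n ∈ s := Finset.mem_image.mpr ⟨n, by simp, rfl⟩
      have hgnum : (∏' i, g (n + 1) l i) =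
          (∏' i, g n l i) * (m (l n) + (cnt n l (l n) : ENNReal)) := by
        rw [htprod (n + 1) l s (subset_refl s), htprod n l s hsub]
        have hfac : ∀ i ∈ s, g (n + 1) l i =
            g n l i * (if i = l n then (m (l n) + (cnt n l (l n) : ENNReal)) else 1) := by
          intro i _
          by_cases hi : i = l n
          · subst hi
            simp only [hg, hcnt, if_pos rfl]
            rw [polya_count_succ, if_pos rfl, Finset.prod_range_succ]
            simp
          · simp only [hg, hcnt, if_neg hi]
            rw [polya_count_succ, if_neg (Ne.symm hi)]
            simp
        rw [Finset.prod_congr rfl hfac, Finset.prod_mul_distrib, Finset.prod_ite_eq' s (l n)]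
        simp [hmem]
      rw [hgnum, Finset.prod_range_succ]
      have hx := (hDen n)
      have hb := hB n
      rw [div_eq_mul_inv, div_eq_mul_inv, div_eq_mul_inv,
        ENNReal.mul_inv (Or.inl hb.1) (Or.inl hb.2)]
      ring
  refine ⟨key, ?_⟩
  intro n l σ
  set l' : ℕ → E := fun k => if h : k < n then l ((σ ⟨k, h⟩ : Fin n) : ℕ) else l k with hl'
  have hset1 : {ω : ℕ → E | ∀ k : Fin n, ω (k : ℕ) = l (k : ℕ)} =
      {ω : ℕ → E | ∀ k < n, ω k = l k} := by
    ext ω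
    simp only [Set.mem_setOf_eq]
    exact ⟨fun h k hk => h ⟨k, hk⟩, fun h k => h k k.isLt⟩
  have hset2 : {ω : ℕ → E | ∀ k : Fin n, ω (k : ℕ) = l ((σ k : Fin n) : ℕ)} =
      {ω : ℕ → E | ∀ k < n, ω k = l' k} := by
    ext ω
    simp only [Set.mem_setOf_eq]
    constructor
    · intro h k hk
      simpa [hl', hk] using h ⟨k, hk⟩
    · intro h k
      simpa [hl', k.isLt] using h k k.isLt
  have hcnteq : ∀ i, cnt n l' i = cnt n l i := by
    intro i
    simp only [hcnt, Finset.card_filter]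
    rw [Finset.sum_range fun k => if l' k = i then 1 else 0,
      Finset.sum_range fun k => if l k = i then 1 else 0]
    have : ∀ k : Fin n, (if l' (k : ℕ) = i then (1 : ℕ) else 0) =
        (if l ((σ k : Fin n) : ℕ) = i then 1 else 0) := by
      intro k
      simp [hl', k.isLt]
    rw [Finset.sum_congr rfl fun k _ => this k]
    exact Equiv.sum_comp σ (fun j : Fin n => if l (j : ℕ) = i then (1 : ℕ) else 0)
  rw [hset1, hset2, key n l, key n l']
  congr 1
  exact tprod_congr fun i => by rw [show g n l i = g n l' i by simp [hg, hcnteq]]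
end
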